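/- Let ζ > −1/2, γ ∈ (−1,∞), and β ∈ (0, (2ζ−γ)/2). Then for every r > 0, ∫₀^∞ t^{β−1} · (∫₀^∞ s^γ · p_ζ^{(2)}(t,r,s) ds) dt = C(β,γ,ζ) · r^{2β+γ−2ζ}, where C(β,γ,ζ) := 2^{−2β} · Γ(β) · Γ((γ+1)/2) · Γ((2ζ−2β−γ)/2) / (Γ((2ζ−γ)/2) · Γ((2β+γ+1)/2)). -/

import Mathlib

open MeasureTheory

/-- The modified Bessel function of the first kind
`I_ν(z) = Σ_{k≥0} (z/2)^{ν+2k}/(k!·Γ(ν+k+1))`, for `z > 0`. -/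
noncomputable def besselI (ν z : ℝ) : ℝ :=
  ∑' k : ℕ, (z / 2) ^ (ν + 2 * (k : ℝ)) / ((k.factorial : ℝ) * Real.Gamma (ν + (k : ℝ) + 1))

/-- The Bessel heat kernel
`p_ζ^{(2)}(t,r,s) = ((rs)^{1/2−ζ}/(2t))·exp(−(r²+s²)/(4t))·I_{ζ−1/2}(rs/(2t))`. -/
noncomputable def besselHeat (ζ t r s : ℝ) : ℝ :=
  (r * s) ^ ((1 : ℝ) / 2 - ζ) / (2 * t) * Real.exp (-((r ^ 2 + s ^ 2) / (4 * t))) *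
    besselI (ζ - 1 / 2) (r * s / (2 * t))

/-- The constant `C(β,γ,ζ)`. -/
noncomputable def Cconst (β γ ζ : ℝ) : ℝ :=
  2 ^ (-(2 * β)) * Real.Gamma β * Real.Gamma ((γ + 1) / 2) *
      Real.Gamma ((2 * ζ - 2 * β - γ) / 2) /
    (Real.Gamma ((2 * ζ - γ) / 2) * Real.Gamma ((2 * β + γ + 1) / 2))

namespace BesselAux

open Set Real Filter

/-! ### Elementary integral computations -/

lemma exp_tsum (x : ℝ) : Real.exp x = ∑' n : ℕ, x ^ n / n.factorial := by
  rw [Real.exp_eq_exp_ℝ, NormedSpace.exp_eq_tsum_div]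

lemma integrableOn_rpow_exp {s b : ℝ} (hs : 0 < s) (hb : 0 < b) :
    IntegrableOn (fun x : ℝ => x ^ (s - 1) * Real.exp (-(b * x))) (Ioi 0) := by
  have h := integrableOn_rpow_mul_exp_neg_mul_rpow (p := 1) (s := s - 1) (b := b)
    (by linarith) one_pos hb
  refine h.congr_fun (fun x hx => ?_) measurableSet_Ioi
  beta_reduce
  rw [Real.rpow_one, neg_mul]

lemma lintegral_rpow_exp {s b : ℝ} (hs : 0 < s) (hb : 0 < b) :
    ∫⁻ x in Ioi (0:ℝ), ENNReal.ofReal (x ^ (s - 1) * Real.exp (-(b * x))) =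
      ENNReal.ofReal ((1 / b) ^ s * Real.Gamma s) := by
  rw [← integral_rpow_mul_exp_neg_mul_Ioi hs hb,
    ← ofReal_integral_eq_lintegral_ofReal (integrableOn_rpow_exp hs hb)]
  exact (ae_restrict_iff' measurableSet_Ioi).2 (Filter.Eventually.of_forall fun x hx => by
    have : (0:ℝ) < x := hx
    positivity)

lemma rpow_neg_inv_eq {x : ℝ} (hx : 0 < x) (c : ℝ) :
    (x ^ (-1 : ℝ)) ^ c = x ^ (-c) := by
  rw [← Real.rpow_mul hx.le]; ring_nf

lemma integrand_inv_eq {a m x : ℝ} (hx : 0 < x) :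
    (|(-1:ℝ)| * x ^ (-1 - 1 : ℝ)) • ((x ^ (-1:ℝ)) ^ (a - 1) * Real.exp (-(m * x ^ (-1:ℝ)))) =
      x ^ (-a - 1) * Real.exp (-(m * x⁻¹)) := by
  rw [smul_eq_mul, rpow_neg_inv_eq hx, Real.rpow_neg_one, abs_neg, abs_one, one_mul,
    ← mul_assoc, ← Real.rpow_add hx]
  norm_num
  ring_nf

lemma integrableOn_rpow_neg_exp_inv {a m : ℝ} (ha : 0 < a) (hm : 0 < m) :
    IntegrableOn (fun t : ℝ => t ^ (-a - 1) * Real.exp (-(m * t⁻¹))) (Ioi 0) := by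
  have h := (integrableOn_Ioi_comp_rpow_iff
      (fun y : ℝ => y ^ (a - 1) * Real.exp (-(m * y))) (p := -1) (by norm_num)).2
      (integrableOn_rpow_exp ha hm)
  exact h.congr_fun (fun x hx => integrand_inv_eq hx) measurableSet_Ioi

lemma integral_rpow_neg_exp_inv {a m : ℝ} (ha : 0 < a) (hm : 0 < m) :
    ∫ t in Ioi (0:ℝ), t ^ (-a - 1) * Real.exp (-(m * t⁻¹)) =
      Real.Gamma a * m ^ (-a) := by
  have h := integral_comp_rpow_Ioi
    (fun y : ℝ => y ^ (a - 1) * Real.exp (-(m * y))) (p := -1) (by norm_num)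
  rw [setIntegral_congr_fun measurableSet_Ioi
    (fun x hx => integrand_inv_eq (a := a) (m := m) hx)] at h
  rw [h, integral_rpow_mul_exp_neg_mul_Ioi ha hm, Real.rpow_neg hm.le, one_div,
    Real.inv_rpow hm.le]
  ring

lemma lintegral_rpow_neg_exp_inv {a m : ℝ} (ha : 0 < a) (hm : 0 < m) :
    ∫⁻ t in Ioi (0:ℝ), ENNReal.ofReal (t ^ (-a - 1) * Real.exp (-(m * t⁻¹))) =
      ENNReal.ofReal (Real.Gamma a * m ^ (-a)) := by
  rw [← integral_rpow_neg_exp_inv ha hm,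
    ← ofReal_integral_eq_lintegral_ofReal (integrableOn_rpow_neg_exp_inv ha hm)]
  exact (ae_restrict_iff' measurableSet_Ioi).2 (Filter.Eventually.of_forall fun x hx => by
    have : (0:ℝ) < x := hx
    positivity)

lemma lintegral_rpow_exp_sq {q b : ℝ} (hq : -1 < q) (hb : 0 < b) :
    ∫⁻ s in Ioi (0:ℝ), ENNReal.ofReal (s ^ q * Real.exp (-(b * s ^ (2:ℕ)))) =
      ENNReal.ofReal (b ^ (-(q + 1) / 2) * (1 / 2) * Real.Gamma ((q + 1) / 2)) := by
  have hval := integral_rpow_mul_exp_neg_mul_rpow (p := 2) (q := q) (b := b)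
    (by norm_num) hq hb
  have hint := integrableOn_rpow_mul_exp_neg_mul_rpow (p := 2) (s := q) (b := b)
    hq (by norm_num) hb
  have hcong : ∀ x ∈ Ioi (0:ℝ), x ^ q * Real.exp (-b * x ^ (2:ℝ)) =
      x ^ q * Real.exp (-(b * x ^ (2:ℕ))) := by
    intro x hx
    rw [neg_mul, Real.rpow_two, sq]
  rw [setIntegral_congr_fun measurableSet_Ioi hcong] at hval
  rw [← hval, ← ofReal_integral_eq_lintegral_ofReal]
  · exact hint.congr_fun hcong measurableSet_Ioi
  · exact (ae_restrict_iff' measurableSet_Ioi).2 (Filter.Eventually.of_forall fun x hx => by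
      have : (0:ℝ) < x := hx
      positivity)

/-! ### The binomial-type series via Gamma integrals -/

lemma tsum_ofReal_gamma_mul_pow {b x : ℝ} (hb : 0 < b) (hx0 : 0 ≤ x) (hx1 : x < 1) :
    ∑' k : ℕ, ENNReal.ofReal (Real.Gamma (b + k) * x ^ k / k.factorial) =
      ENNReal.ofReal (Real.Gamma b * (1 - x) ^ (-b)) := by
  have key : ∀ k : ℕ, ENNReal.ofReal (Real.Gamma (b + k) * x ^ k / k.factorial) =
      ∫⁻ u in Ioi (0:ℝ),
        ENNReal.ofReal (u ^ (b - 1) * Real.exp (-u) * (x ^ k * u ^ k / k.factorial)) := by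
    intro k
    have hbk : (0:ℝ) < b + k := by positivity
    have h1 := lintegral_rpow_exp (s := b + k) (b := 1) hbk one_pos
    simp only [one_div, inv_one, Real.one_rpow, one_mul] at h1
    have h2 : ∀ u ∈ Ioi (0:ℝ),
        u ^ (b - 1) * Real.exp (-u) * (x ^ k * u ^ k / k.factorial) =
          (x ^ k / k.factorial) * (u ^ (b + k - 1) * Real.exp (-u)) := by
      intro u hu
      have hu : (0:ℝ) < u := hu
      rw [show (b + k - 1 : ℝ) = (b - 1) + k by ring, Real.rpow_add hu, Real.rpow_natCast]
      ring
    rw [setLIntegral_congr_fun_ae measurableSet_Ioi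
        (Filter.Eventually.of_forall fun u hu => by
          rw [h2 u hu, ENNReal.ofReal_mul (by positivity)]),
      lintegral_const_mul' _ _ ENNReal.ofReal_ne_top, h1, ← ENNReal.ofReal_mul (by positivity)]
    congr 1
    ring
  simp_rw [key]
  rw [← lintegral_tsum]
  · have inner : ∀ u ∈ Ioi (0:ℝ),
        (∑' k : ℕ, ENNReal.ofReal
            (u ^ (b - 1) * Real.exp (-u) * (x ^ k * u ^ k / k.factorial))) =
          ENNReal.ofReal (u ^ (b - 1) * Real.exp (-((1 - x) * u))) := by
      intro u hu
      have hu : (0:ℝ) < u := hu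
      have h3 : ∀ k : ℕ, x ^ k * u ^ k / (k.factorial : ℝ) = (x * u) ^ k / k.factorial := by
        intro k; rw [mul_pow]
      have hsum : Summable (fun k : ℕ => (x * u) ^ k / (k.factorial : ℝ)) :=
        Real.summable_pow_div_factorial _
      calc (∑' k : ℕ, ENNReal.ofReal
            (u ^ (b - 1) * Real.exp (-u) * (x ^ k * u ^ k / k.factorial)))
          = ∑' k : ℕ, ENNReal.ofReal (u ^ (b - 1) * Real.exp (-u)) *
              ENNReal.ofReal ((x * u) ^ k / k.factorial) := by
            refine tsum_congr fun k => ?_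
            rw [h3 k, ← ENNReal.ofReal_mul (by positivity)]
        _ = ENNReal.ofReal (u ^ (b - 1) * Real.exp (-u)) *
              ENNReal.ofReal (∑' k : ℕ, (x * u) ^ k / (k.factorial : ℝ)) := by
            rw [ENNReal.tsum_mul_left, ENNReal.ofReal_tsum_of_nonneg
              (fun k => by positivity) hsum]
        _ = ENNReal.ofReal (u ^ (b - 1) * Real.exp (-((1 - x) * u))) := by
            rw [← exp_tsum, ← ENNReal.ofReal_mul (by positivity), mul_assoc,
              ← Real.exp_add]
            congr 2
            ring_nf
    rw [setLIntegral_congr_fun_ae measurableSet_Ioi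
      (Filter.Eventually.of_forall fun u hu => inner u hu)]
    have h4 := lintegral_rpow_exp (s := b) (b := 1 - x) hb (by linarith)
    rw [h4, one_div, Real.inv_rpow (by linarith), ← Real.rpow_neg (by linarith)]
    rw [mul_comm]
  · intro k
    refine (Measurable.ennreal_ofReal ?_).aemeasurable
    fun_prop

/-! ### The real Beta integral -/

lemma beta_eqOn {u v : ℝ} : ∀ x ∈ Icc (0:ℝ) 1,
    ((x:ℂ) ^ ((u:ℂ) - 1) * ((1:ℂ) - (x:ℂ)) ^ ((v:ℂ) - 1)) =
      ((x ^ (u - 1) * (1 - x) ^ (v - 1) : ℝ) : ℂ) := by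
  intro x hx
  have h1 : ((x:ℂ)) ^ ((u:ℂ) - 1) = ((x ^ (u - 1) : ℝ) : ℂ) := by
    rw [Complex.ofReal_cpow hx.1]; push_cast; ring_nf
  have h2 : ((1:ℂ) - (x:ℂ)) ^ ((v:ℂ) - 1) = (((1 - x) ^ (v - 1) : ℝ) : ℂ) := by
    rw [show ((1:ℂ) - (x:ℂ)) = (((1 - x : ℝ)):ℂ) by push_cast; ring,
      Complex.ofReal_cpow (by linarith [hx.2])]
    push_cast; ring_nf
  rw [h1, h2]
  push_cast
  ring

lemma integrableOn_beta {u v : ℝ} (hu : 0 < u) (hv : 0 < v) :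
    IntegrableOn (fun x : ℝ => x ^ (u - 1) * (1 - x) ^ (v - 1)) (Ioo 0 1) := by
  have hc := Complex.betaIntegral_convergent (u := u) (v := v) (by simpa) (by simpa)
  have hIoc : IntegrableOn (fun x : ℝ => (x:ℂ) ^ ((u:ℂ) - 1) * ((1:ℂ) - (x:ℂ)) ^ ((v:ℂ) - 1))
      (Ioc 0 1) := by
    rw [← intervalIntegrable_iff_integrableOn_Ioc_of_le zero_le_one]
    exact hc
  have hIoo := hIoc.mono_set Ioo_subset_Ioc_self
  have h2 : IntegrableOn (fun x : ℝ => ((x ^ (u - 1) * (1 - x) ^ (v - 1) : ℝ) : ℂ)) (Ioo 0 1) :=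
    hIoo.congr_fun (fun x hx => beta_eqOn x ⟨hx.1.le, hx.2.le⟩) measurableSet_Ioo
  have h3 : IntegrableOn (fun x : ℝ => ‖((x ^ (u - 1) * (1 - x) ^ (v - 1) : ℝ) : ℂ)‖)
      (Ioo 0 1) := h2.norm
  refine (h3.congr_fun (fun x hx => ?_) measurableSet_Ioo)
  beta_reduce
  rw [Complex.norm_real, Real.norm_eq_abs, abs_mul,
    abs_of_nonneg (Real.rpow_nonneg hx.1.le _),
    abs_of_nonneg (Real.rpow_nonneg (by linarith [hx.2]) _)]

lemma real_beta {u v : ℝ} (hu : 0 < u) (hv : 0 < v) :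
    ∫ x in Ioo (0:ℝ) 1, x ^ (u - 1) * (1 - x) ^ (v - 1) =
      Real.Gamma u * Real.Gamma v / Real.Gamma (u + v) := by
  have hc := Complex.Gamma_mul_Gamma_eq_betaIntegral (s := u) (t := v) (by simpa) (by simpa)
  have hbeta : Complex.betaIntegral u v =
      ((∫ x in Ioo (0:ℝ) 1, x ^ (u - 1) * (1 - x) ^ (v - 1) : ℝ) : ℂ) := by
    unfold Complex.betaIntegral
    rw [intervalIntegral.integral_congr (g := fun x : ℝ =>
        ((x ^ (u - 1) * (1 - x) ^ (v - 1) : ℝ) : ℂ))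
      (fun x hx => beta_eqOn x (by rwa [Set.uIcc_of_le zero_le_one] at hx))]
    rw [intervalIntegral.integral_ofReal, intervalIntegral.integral_of_le zero_le_one,
      MeasureTheory.integral_Ioc_eq_integral_Ioo]
  rw [hbeta, ← Complex.ofReal_add, Complex.Gamma_ofReal, Complex.Gamma_ofReal,
    Complex.Gamma_ofReal, ← Complex.ofReal_mul, ← Complex.ofReal_mul] at hc
  have := Complex.ofReal_inj.1 hc
  have hΓ : Real.Gamma (u + v) ≠ 0 := (Real.Gamma_pos_of_pos (by linarith)).ne'
  field_simp [this]
  rw [this]; ring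

lemma lintegral_beta {u v : ℝ} (hu : 0 < u) (hv : 0 < v) :
    ∫⁻ x in Ioo (0:ℝ) 1, ENNReal.ofReal (x ^ (u - 1) * (1 - x) ^ (v - 1)) =
      ENNReal.ofReal (Real.Gamma u * Real.Gamma v / Real.Gamma (u + v)) := by
  rw [← real_beta hu hv, ← ofReal_integral_eq_lintegral_ofReal (integrableOn_beta hu hv)]
  exact (ae_restrict_iff' measurableSet_Ioo).2 (Filter.Eventually.of_forall fun x hx => by
    exact mul_nonneg (Real.rpow_nonneg hx.1.le _) (Real.rpow_nonneg (by linarith [hx.2]) _))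

/-! ### Gauss's hypergeometric summation theorem at 1 (nonnegative, `ℝ≥0∞` form) -/

lemma gauss_sum {a b c : ℝ} (ha : 0 < a) (hb : 0 < b) (hc : a + b < c) :
    ∑' k : ℕ, ENNReal.ofReal
        (Real.Gamma (a + k) * Real.Gamma (b + k) / (k.factorial * Real.Gamma (c + k))) =
      ENNReal.ofReal (Real.Gamma a * Real.Gamma b * Real.Gamma (c - a - b) /
        (Real.Gamma (c - a) * Real.Gamma (c - b))) := by
  have hca : 0 < c - a := by linarith
  have hcb : 0 < c - b := by linarith
  have hcab : 0 < c - a - b := by linarith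
  have hΓca : 0 < Real.Gamma (c - a) := Real.Gamma_pos_of_pos hca
  have hΓb : 0 < Real.Gamma b := Real.Gamma_pos_of_pos hb
  have hc0 : (0:ℝ) < c := by linarith
  have key : ∀ k : ℕ, ENNReal.ofReal
      (Real.Gamma (a + k) * Real.Gamma (b + k) / (k.factorial * Real.Gamma (c + k))) =
      ∫⁻ x in Ioo (0:ℝ) 1, ENNReal.ofReal
        ((Real.Gamma (b + k) * x ^ k / k.factorial / Real.Gamma (c - a)) *
          (x ^ (a - 1) * (1 - x) ^ (c - a - 1))) := by
    intro k
    have hak : (0:ℝ) < a + k := add_pos_of_pos_of_nonneg ha k.cast_nonneg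
    have hbk : (0:ℝ) < b + k := add_pos_of_pos_of_nonneg hb k.cast_nonneg
    have hck : (0:ℝ) < c + k := add_pos_of_pos_of_nonneg hc0 k.cast_nonneg
    have hfac : (0:ℝ) < k.factorial := by positivity
    have hnn1 : (0:ℝ) ≤ Real.Gamma (b + k) / (k.factorial * Real.Gamma (c - a)) :=
      div_nonneg (Real.Gamma_pos_of_pos hbk).le (by positivity)
    have hbeta := lintegral_beta (u := a + k) (v := c - a) hak hca
    have hsum : (a + k) + (c - a) = c + k := by ring
    rw [hsum] at hbeta
    calc ENNReal.ofReal (Real.Gamma (a + (k:ℝ)) * Real.Gamma (b + (k:ℝ)) /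
            ((k.factorial : ℝ) * Real.Gamma (c + (k:ℝ))))
        = ENNReal.ofReal (Real.Gamma (b + k) / (k.factorial * Real.Gamma (c - a))) *
            ENNReal.ofReal (Real.Gamma (a + k) * Real.Gamma (c - a) / Real.Gamma (c + k)) := by
          rw [← ENNReal.ofReal_mul hnn1]
          congr 1
          have h1 : Real.Gamma (c + k) ≠ 0 := (Real.Gamma_pos_of_pos hck).ne'
          have h2 : (k.factorial : ℝ) ≠ 0 := Nat.cast_ne_zero.2 k.factorial_ne_zero
          field_simp
      _ = ENNReal.ofReal (Real.Gamma (b + k) / (k.factorial * Real.Gamma (c - a))) *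
            ∫⁻ x in Ioo (0:ℝ) 1, ENNReal.ofReal (x ^ ((a + k) - 1) * (1 - x) ^ ((c - a) - 1)) := by
          rw [hbeta]
      _ = _ := by
          rw [← lintegral_const_mul' _ _ ENNReal.ofReal_ne_top]
          refine setLIntegral_congr_fun_ae measurableSet_Ioo (Filter.Eventually.of_forall
            fun x hx => ?_)
          rw [← ENNReal.ofReal_mul hnn1]
          congr 1
          have hx1 : (0:ℝ) < x := hx.1
          rw [show (a + k - 1 : ℝ) = k + (a - 1) by ring, Real.rpow_add hx1,
            Real.rpow_natCast]
          ring
  simp_rw [key]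
  rw [← lintegral_tsum (fun k => (Measurable.ennreal_ofReal (by fun_prop)).aemeasurable)]
  have inner : ∀ x ∈ Ioo (0:ℝ) 1, (∑' k : ℕ, ENNReal.ofReal
      ((Real.Gamma (b + k) * x ^ k / k.factorial / Real.Gamma (c - a)) *
        (x ^ (a - 1) * (1 - x) ^ (c - a - 1)))) =
      ENNReal.ofReal (Real.Gamma b / Real.Gamma (c - a)) *
        ENNReal.ofReal (x ^ (a - 1) * (1 - x) ^ ((c - a - b) - 1)) := by
    intro x hx
    have hx1 : (0:ℝ) < x := hx.1
    have hx2 : x < 1 := hx.2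
    have h1x : (0:ℝ) < 1 - x := by linarith
    have hD : (0:ℝ) ≤ x ^ (a - 1) * (1 - x) ^ (c - a - 1) / Real.Gamma (c - a) :=
      div_nonneg (mul_nonneg (Real.rpow_nonneg hx1.le _) (Real.rpow_nonneg h1x.le _)) hΓca.le
    calc (∑' k : ℕ, ENNReal.ofReal
        ((Real.Gamma (b + k) * x ^ k / k.factorial / Real.Gamma (c - a)) *
          (x ^ (a - 1) * (1 - x) ^ (c - a - 1))))
        = ∑' k : ℕ, (ENNReal.ofReal (x ^ (a - 1) * (1 - x) ^ (c - a - 1) / Real.Gamma (c - a)) *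
            ENNReal.ofReal (Real.Gamma (b + k) * x ^ k / k.factorial)) := by
          refine tsum_congr fun k => ?_
          rw [← ENNReal.ofReal_mul hD]
          congr 1
          field_simp
      _ = ENNReal.ofReal (x ^ (a - 1) * (1 - x) ^ (c - a - 1) / Real.Gamma (c - a)) *
            ENNReal.ofReal (Real.Gamma b * (1 - x) ^ (-b)) := by
          rw [ENNReal.tsum_mul_left, tsum_ofReal_gamma_mul_pow hb hx1.le hx2]
      _ = _ := by
          rw [← ENNReal.ofReal_mul hD, ← ENNReal.ofReal_mul (div_nonneg hΓb.le hΓca.le)]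
          congr 1
          rw [show (c - a - b - 1 : ℝ) = (c - a - 1) + (-b) by ring, Real.rpow_add h1x]
          field_simp
  rw [setLIntegral_congr_fun_ae measurableSet_Ioo (Filter.Eventually.of_forall inner),
    lintegral_const_mul' _ _ ENNReal.ofReal_ne_top, lintegral_beta ha hcab,
    ← ENNReal.ofReal_mul (div_nonneg hΓb.le hΓca.le)]
  congr 1
  rw [show a + (c - a - b) = c - b by ring]
  have h1 : Real.Gamma (c - b) ≠ 0 := (Real.Gamma_pos_of_pos hcb).ne'
  field_simp

/-! ### Summability of the Bessel series -/

lemma besselI_summable {ν z : ℝ} (hν : -1 < ν) (hz : 0 < z) :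
    Summable (fun k : ℕ =>
      (z / 2) ^ (ν + 2 * (k : ℝ)) / ((k.factorial : ℝ) * Real.Gamma (ν + (k : ℝ) + 1))) := by
  set f : ℕ → ℝ := fun k =>
    (z / 2) ^ (ν + 2 * (k : ℝ)) / ((k.factorial : ℝ) * Real.Gamma (ν + (k : ℝ) + 1)) with hf
  have hz2 : (0:ℝ) < z / 2 := by linarith
  have hpos : ∀ k : ℕ, 0 < f k := by
    intro k
    have h1 : (0:ℝ) < ν + (k : ℝ) + 1 := by
      have : (0:ℝ) ≤ (k : ℝ) := k.cast_nonneg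
      linarith
    have h2 : (0:ℝ) < Real.Gamma (ν + (k : ℝ) + 1) := Real.Gamma_pos_of_pos h1
    have h3 : (0:ℝ) < (z / 2) ^ (ν + 2 * (k : ℝ)) := Real.rpow_pos_of_pos hz2 _
    have h4 : (0:ℝ) < (k.factorial : ℝ) := by positivity
    positivity
  have hratio : ∀ k : ℕ, f (k + 1) / f k =
      (z / 2) ^ (2:ℝ) / (((k:ℝ) + 1) * (ν + (k:ℝ) + 1)) := by
    intro k
    have h1 : (0:ℝ) < ν + (k : ℝ) + 1 := by
      have : (0:ℝ) ≤ (k : ℝ) := k.cast_nonneg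
      linarith
    have hΓ : Real.Gamma (ν + ((k:ℝ) + 1) + 1) =
        (ν + (k:ℝ) + 1) * Real.Gamma (ν + (k:ℝ) + 1) := by
      rw [show (ν + ((k:ℝ) + 1) + 1) = (ν + (k:ℝ) + 1) + 1 by ring, Real.Gamma_add_one h1.ne']
    have hpow : (z / 2) ^ (ν + 2 * ((k:ℝ) + 1)) =
        (z / 2) ^ (ν + 2 * (k:ℝ)) * (z / 2) ^ (2:ℝ) := by
      rw [← Real.rpow_add hz2]
      ring_nf
    rw [hf]
    simp only [Nat.cast_add, Nat.cast_one, Nat.factorial_succ, Nat.cast_mul]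
    rw [hpow, hΓ]
    have h2 : (0:ℝ) < Real.Gamma (ν + (k : ℝ) + 1) := Real.Gamma_pos_of_pos h1
    have h4 : (0:ℝ) < (k.factorial : ℝ) := by positivity
    have h5 : (0:ℝ) < (z / 2) ^ (ν + 2 * (k:ℝ)) := Real.rpow_pos_of_pos hz2 _
    field_simp
  refine summable_of_ratio_test_tendsto_lt_one one_pos
    (Filter.Eventually.of_forall fun k => (hpos k).ne') ?_
  have heq : ∀ k : ℕ, ‖f (k + 1)‖ / ‖f k‖ =
      (z / 2) ^ (2:ℝ) / (((k:ℝ) + 1) * (ν + (k:ℝ) + 1)) := by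
    intro k
    rw [Real.norm_eq_abs, Real.norm_eq_abs, abs_of_pos (hpos _), abs_of_pos (hpos _),
      ← hratio k]
  simp_rw [heq]
  have hden : Tendsto (fun k : ℕ => ((k:ℝ) + 1) * (ν + (k:ℝ) + 1)) atTop atTop := by
    apply Filter.Tendsto.atTop_mul_atTop₀
    · exact tendsto_atTop_add_const_right _ _ tendsto_natCast_atTop_atTop
    · exact tendsto_atTop_add_const_right _ _
        (tendsto_atTop_add_const_left _ _ tendsto_natCast_atTop_atTop)
  exact Tendsto.div_atTop tendsto_const_nhds hden

lemma besselI_hasSum {ν z : ℝ} (hν : -1 < ν) (hz : 0 < z) :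
    HasSum (fun k : ℕ =>
      (z / 2) ^ (ν + 2 * (k : ℝ)) / ((k.factorial : ℝ) * Real.Gamma (ν + (k : ℝ) + 1)))
      (besselI ν z) :=
  (besselI_summable hν hz).hasSum

lemma besselI_nonneg {ν z : ℝ} (hν : -1 < ν) (hz : 0 < z) : 0 ≤ besselI ν z := by
  refine tsum_nonneg fun k => ?_
  have h1 : (0:ℝ) < ν + (k : ℝ) + 1 := by
    have : (0:ℝ) ≤ (k : ℝ) := k.cast_nonneg
    linarith
  have h2 : (0:ℝ) < Real.Gamma (ν + (k : ℝ) + 1) := Real.Gamma_pos_of_pos h1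
  have h3 : (0:ℝ) < (z / 2) ^ (ν + 2 * (k : ℝ)) := Real.rpow_pos_of_pos (by linarith) _
  have h4 : (0:ℝ) < (k.factorial : ℝ) := by positivity
  positivity

/-! ### The term-by-term expansion of the heat-kernel integrand -/

/-- `k`-th term of the expansion of `s^γ * besselHeat ζ t r s`. -/
noncomputable def bTerm (ζ γ r : ℝ) (k : ℕ) (t s : ℝ) : ℝ :=
  s ^ γ * ((r * s) ^ ((1 : ℝ) / 2 - ζ) / (2 * t) * Real.exp (-((r ^ 2 + s ^ 2) / (4 * t)))) *
    ((r * s / (2 * t) / 2) ^ (ζ - 1 / 2 + 2 * (k : ℝ)) /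
      ((k.factorial : ℝ) * Real.Gamma (ζ - 1 / 2 + (k : ℝ) + 1)))

/-- constant appearing after the `s`-integration. -/
noncomputable def bC1 (ζ β r : ℝ) (k : ℕ) (t : ℝ) : ℝ :=
  t ^ (β - 1) * (r ^ ((1:ℝ)/2 - ζ) * (r / (4*t)) ^ (ζ - 1/2 + 2*(k:ℝ)) / (2*t)) *
    Real.exp (-(r ^ 2 / 4 * t⁻¹)) / ((k.factorial : ℝ) * Real.Gamma (ζ - 1/2 + (k:ℝ) + 1))

lemma gamma_shift_pos {ζ : ℝ} (hζ : -(1:ℝ)/2 < ζ) (k : ℕ) :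
    (0:ℝ) < Real.Gamma (ζ - 1/2 + (k:ℝ) + 1) := by
  refine Real.Gamma_pos_of_pos ?_
  have : (0:ℝ) ≤ (k : ℝ) := k.cast_nonneg
  linarith

lemma bTerm_nonneg {ζ γ r : ℝ} (hζ : -(1:ℝ)/2 < ζ) (hr : 0 < r) (k : ℕ) {t s : ℝ}
    (ht : 0 < t) (hs : 0 < s) : 0 ≤ bTerm ζ γ r k t s := by
  unfold bTerm
  have hg := gamma_shift_pos hζ k
  have hrs : (0:ℝ) < r * s := by positivity
  have h1 : (0:ℝ) < (r * s) ^ ((1 : ℝ) / 2 - ζ) := Real.rpow_pos_of_pos hrs _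
  have h2 : (0:ℝ) < (r * s / (2 * t) / 2) ^ (ζ - 1 / 2 + 2 * (k : ℝ)) :=
    Real.rpow_pos_of_pos (by positivity) _
  have h4 : (0:ℝ) < (k.factorial : ℝ) := by positivity
  positivity

lemma bC1_nonneg {ζ β r : ℝ} (hζ : -(1:ℝ)/2 < ζ) (hr : 0 < r) (k : ℕ) {t : ℝ}
    (ht : 0 < t) : 0 ≤ bC1 ζ β r k t := by
  unfold bC1
  have hg := gamma_shift_pos hζ k
  have h1 : (0:ℝ) < r ^ ((1:ℝ)/2 - ζ) := Real.rpow_pos_of_pos hr _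
  have h2 : (0:ℝ) < (r / (4*t)) ^ (ζ - 1/2 + 2*(k:ℝ)) :=
    Real.rpow_pos_of_pos (by positivity) _
  have h3 : (0:ℝ) < t ^ (β - 1) := Real.rpow_pos_of_pos ht _
  have h4 : (0:ℝ) < (k.factorial : ℝ) := by positivity
  positivity

lemma bTerm_hasSum {ζ γ r : ℝ} (hζ : -(1:ℝ)/2 < ζ) (hr : 0 < r) {t s : ℝ}
    (ht : 0 < t) (hs : 0 < s) :
    HasSum (fun k => bTerm ζ γ r k t s) (s ^ γ * besselHeat ζ t r s) := by
  have hz : 0 < r * s / (2 * t) := by positivity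
  have hν : (-1:ℝ) < ζ - 1/2 := by linarith
  have h := (besselI_hasSum hν hz).mul_left
    (s ^ γ * ((r * s) ^ ((1 : ℝ) / 2 - ζ) / (2 * t) *
      Real.exp (-((r ^ 2 + s ^ 2) / (4 * t)))))
  have e : s ^ γ * besselHeat ζ t r s = s ^ γ * ((r * s) ^ ((1 : ℝ) / 2 - ζ) / (2 * t) *
      Real.exp (-((r ^ 2 + s ^ 2) / (4 * t)))) * besselI (ζ - 1 / 2) (r * s / (2 * t)) := by
    unfold besselHeat
    ring
  rw [e]
  exact h

lemma bTerm_measurable (ζ γ β r : ℝ) (k : ℕ) :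
    Measurable (fun p : ℝ × ℝ => ENNReal.ofReal (p.1 ^ (β - 1) * bTerm ζ γ r k p.1 p.2)) := by
  unfold bTerm
  fun_prop

lemma bTerm_measurable' (ζ γ β r : ℝ) (k : ℕ) (t : ℝ) :
    Measurable (fun s : ℝ => ENNReal.ofReal (t ^ (β - 1) * bTerm ζ γ r k t s)) := by
  unfold bTerm
  fun_prop

lemma bTerm_lintegral_measurable (ζ γ β r : ℝ) (k : ℕ) :
    Measurable (fun t : ℝ => ∫⁻ s in Set.Ioi (0:ℝ),
      ENNReal.ofReal (t ^ (β - 1) * bTerm ζ γ r k t s)) := by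
  exact (bTerm_measurable ζ γ β r k).lintegral_prod_right'

/-- the inner `s`-integral of each term. -/
lemma lintegral_s_bTerm {ζ γ β r : ℝ} (hζ : -(1:ℝ)/2 < ζ) (hγ : -1 < γ) (hr : 0 < r)
    (k : ℕ) {t : ℝ} (ht : 0 < t) :
    ∫⁻ s in Ioi (0:ℝ), ENNReal.ofReal (t ^ (β - 1) * bTerm ζ γ r k t s) =
      ENNReal.ofReal (bC1 ζ β r k t) *
        ENNReal.ofReal ((1/(4*t)) ^ (-(γ + 2*(k:ℝ) + 1) / 2) * (1 / 2) *
          Real.Gamma ((γ + 2*(k:ℝ) + 1) / 2)) := by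
  have hq : (-1:ℝ) < γ + 2*(k:ℝ) := by
    have : (0:ℝ) ≤ (k:ℝ) := k.cast_nonneg
    linarith
  have hb : (0:ℝ) < 1/(4*t) := by positivity
  have key : ∀ s ∈ Ioi (0:ℝ), t ^ (β - 1) * bTerm ζ γ r k t s =
      bC1 ζ β r k t * (s ^ (γ + 2*(k:ℝ)) * Real.exp (-(1/(4*t) * s ^ (2:ℕ)))) := by
    intro s hs
    have hs : (0:ℝ) < s := hs
    unfold bTerm bC1
    rw [Real.mul_rpow hr.le hs.le,
      show r * s / (2 * t) / 2 = r / (4 * t) * s by ring,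
      Real.mul_rpow (by positivity) hs.le,
      show -((r ^ 2 + s ^ 2) / (4 * t)) = -(r^2/4 * t⁻¹) + -(1/(4*t) * s^(2:ℕ)) by ring,
      Real.exp_add,
      show s ^ (γ + 2*(k:ℝ)) = s ^ γ * s ^ ((1:ℝ)/2 - ζ) * s ^ (ζ - 1/2 + 2*(k:ℝ)) by
        rw [← Real.rpow_add hs, ← Real.rpow_add hs]; congr 1; ring]
    ring
  rw [setLIntegral_congr_fun_ae measurableSet_Ioi (Filter.Eventually.of_forall fun s hs => by
      rw [key s hs, ENNReal.ofReal_mul (bC1_nonneg hζ hr k ht)]),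
    lintegral_const_mul' _ _ ENNReal.ofReal_ne_top,
    lintegral_rpow_exp_sq hq hb]

/-- constant obtained after both integrations, before summation. -/
noncomputable def bC2 (ζ γ r : ℝ) (k : ℕ) : ℝ :=
  r ^ ((1:ℝ)/2 - ζ) * r ^ (ζ - 1/2 + 2*(k:ℝ)) * 4 ^ (-(ζ - 1/2 + 2*(k:ℝ))) *
      4 ^ ((γ + 2*(k:ℝ) + 1)/2) * (1/4) *
    (Real.Gamma ((γ + 2*(k:ℝ) + 1) / 2) / ((k.factorial : ℝ) * Real.Gamma (ζ - 1/2 + (k:ℝ) + 1)))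

lemma bC2_nonneg {ζ γ r : ℝ} (hζ : -(1:ℝ)/2 < ζ) (hγ : -1 < γ) (hr : 0 < r) (k : ℕ) :
    0 ≤ bC2 ζ γ r k := by
  unfold bC2
  have hg := gamma_shift_pos hζ k
  have hg2 : (0:ℝ) < Real.Gamma ((γ + 2*(k:ℝ) + 1) / 2) := by
    refine Real.Gamma_pos_of_pos ?_
    have : (0:ℝ) ≤ (k:ℝ) := k.cast_nonneg
    linarith
  have h1 : (0:ℝ) < r ^ ((1:ℝ)/2 - ζ) := Real.rpow_pos_of_pos hr _
  have h2 : (0:ℝ) < r ^ (ζ - 1/2 + 2*(k:ℝ)) := Real.rpow_pos_of_pos hr _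
  have h3 : (0:ℝ) < (4:ℝ) ^ (-(ζ - 1/2 + 2*(k:ℝ))) := Real.rpow_pos_of_pos (by norm_num) _
  have h4 : (0:ℝ) < (4:ℝ) ^ ((γ + 2*(k:ℝ) + 1)/2) := Real.rpow_pos_of_pos (by norm_num) _
  have h5 : (0:ℝ) < (k.factorial : ℝ) := by positivity
  positivity

/-- pointwise identity reducing the `t`-integrand to a pure power/exponential. -/
lemma bC1_mul_eq {ζ γ β r : ℝ} (hr : 0 < r) (k : ℕ) {t : ℝ} (ht : 0 < t) :
    bC1 ζ β r k t * ((1/(4*t)) ^ (-(γ + 2*(k:ℝ) + 1) / 2) * (1 / 2) *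
        Real.Gamma ((γ + 2*(k:ℝ) + 1) / 2)) =
      bC2 ζ γ r k * (t ^ (-((2*ζ - 2*β - γ)/2 + (k:ℝ)) - 1) *
        Real.exp (-(r ^ 2 / 4 * t⁻¹))) := by
  unfold bC1 bC2
  have h4t : (0:ℝ) ≤ 4 * t := by positivity
  have h4 : (0:ℝ) ≤ 4 := by norm_num
  have e1 : ((1:ℝ)/(4*t)) ^ (-(γ + 2*(k:ℝ) + 1) / 2) =
      4 ^ ((γ + 2*(k:ℝ) + 1) / 2) * t ^ ((γ + 2*(k:ℝ) + 1) / 2) := by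
    rw [one_div, Real.inv_rpow h4t, ← Real.rpow_neg h4t,
      show -(-(γ + 2*(k:ℝ) + 1) / 2) = (γ + 2*(k:ℝ) + 1) / 2 by ring,
      Real.mul_rpow h4 ht.le]
  have e2 : (r / (4*t)) ^ (ζ - 1/2 + 2*(k:ℝ)) =
      r ^ (ζ - 1/2 + 2*(k:ℝ)) * (4 ^ (-(ζ - 1/2 + 2*(k:ℝ))) * t ^ (-(ζ - 1/2 + 2*(k:ℝ)))) := by
    rw [Real.div_rpow hr.le h4t, Real.mul_rpow h4 ht.le, Real.rpow_neg h4, Real.rpow_neg ht.le]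
    field_simp
  have e3 : t ^ (-((2*ζ - 2*β - γ)/2 + (k:ℝ)) - 1) =
      t ^ (β - 1) * t ^ (-(ζ - 1/2 + 2*(k:ℝ))) * t ^ ((γ + 2*(k:ℝ) + 1) / 2) * t⁻¹ := by
    rw [← Real.rpow_neg_one t, ← Real.rpow_add ht, ← Real.rpow_add ht, ← Real.rpow_add ht]
    congr 1; ring
  rw [e1, e2, e3]
  ring

/-- the full `t`- and `s`-integral of each term. -/
lemma lintegral_ts_bTerm {ζ γ β r : ℝ} (hζ : -(1:ℝ)/2 < ζ) (hγ : -1 < γ)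
    (hβ : 0 < (2*ζ - 2*β - γ)/2) (hr : 0 < r) (k : ℕ) :
    ∫⁻ t in Ioi (0:ℝ), ∫⁻ s in Ioi (0:ℝ), ENNReal.ofReal (t ^ (β - 1) * bTerm ζ γ r k t s) =
      ENNReal.ofReal (2 ^ (-(2*β)) * r ^ (2*β + γ - 2*ζ)) *
        ENNReal.ofReal (Real.Gamma ((γ+1)/2 + k) * Real.Gamma ((2*ζ - 2*β - γ)/2 + k) /
          (k.factorial * Real.Gamma (ζ + 1/2 + k))) := by
  have hak : (0:ℝ) < (2*ζ - 2*β - γ)/2 + k := add_pos_of_pos_of_nonneg hβ k.cast_nonneg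
  have hm : (0:ℝ) < r ^ 2 / 4 := by positivity
  rw [setLIntegral_congr_fun_ae measurableSet_Ioi (Filter.Eventually.of_forall fun t ht => by
    rw [lintegral_s_bTerm hζ hγ hr k ht,
      ← ENNReal.ofReal_mul (bC1_nonneg hζ hr k ht), bC1_mul_eq hr k ht,
      ENNReal.ofReal_mul (bC2_nonneg hζ hγ hr k)])]
  rw [lintegral_const_mul' _ _ ENNReal.ofReal_ne_top,
    lintegral_rpow_neg_exp_inv hak hm, ← ENNReal.ofReal_mul (bC2_nonneg hζ hγ hr k),
    ← ENNReal.ofReal_mul (by positivity)]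
  congr 1
  unfold bC2
  have h4 : (0:ℝ) ≤ 4 := by norm_num
  have e4 : (r ^ 2 / 4) ^ (-((2*ζ - 2*β - γ)/2 + (k:ℝ))) =
      r ^ (2 * (-((2*ζ - 2*β - γ)/2 + (k:ℝ)))) * 4 ^ ((2*ζ - 2*β - γ)/2 + (k:ℝ)) := by
    rw [show (r^2/4 : ℝ) = r^(2:ℝ)/4 by rw [Real.rpow_two],
      Real.div_rpow (Real.rpow_nonneg hr.le _) h4, ← Real.rpow_mul hr.le,
      Real.rpow_neg h4]
    field_simp
  have e5 : r ^ ((1:ℝ)/2 - ζ) * r ^ (ζ - 1/2 + 2*(k:ℝ)) *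
      r ^ (2 * (-((2*ζ - 2*β - γ)/2 + (k:ℝ)))) = r ^ (2*β + γ - 2*ζ) := by
    rw [← Real.rpow_add hr, ← Real.rpow_add hr]
    congr 1; ring
  have e6 : (4:ℝ) ^ (-(ζ - 1/2 + 2*(k:ℝ))) * 4 ^ ((γ + 2*(k:ℝ) + 1)/2) *
      4 ^ ((2*ζ - 2*β - γ)/2 + (k:ℝ)) * (1/4) = 2 ^ (-(2*β)) := by
    rw [show (1:ℝ)/4 = (4:ℝ) ^ (-1:ℝ) by rw [Real.rpow_neg_one]; norm_num,
      ← Real.rpow_add (by norm_num), ← Real.rpow_add (by norm_num),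
      ← Real.rpow_add (by norm_num),
      show (4:ℝ) = 2 ^ (2:ℝ) by rw [Real.rpow_two]; norm_num,
      ← Real.rpow_mul (by norm_num)]
    congr 1; ring
  rw [show Real.Gamma ((γ + 2*(k:ℝ) + 1) / 2) = Real.Gamma ((γ+1)/2 + (k:ℝ)) by
      congr 1; ring,
    show Real.Gamma (ζ - 1/2 + (k:ℝ) + 1) = Real.Gamma (ζ + 1/2 + (k:ℝ)) by
      congr 1; ring,
    e4, ← e6, ← e5]
  ring

end BesselAux

open Set Real Filter BesselAux in
/-- for `ζ > −1/2`, `γ > −1` and `β ∈ (0,(2ζ−γ)/2)`,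
`∫₀^∞ t^{β−1}·(∫₀^∞ s^γ·p_ζ^{(2)}(t,r,s) ds) dt = C(β,γ,ζ)·r^{2β+γ−2ζ}`. -/
theorem besselHeat_space_time_power_integral (ζ γ β : ℝ) (hζ : -(1:ℝ)/2 < ζ)
    (hγ : -1 < γ) (hβ : β ∈ Set.Ioo (0:ℝ) ((2 * ζ - γ) / 2)) (r : ℝ) (hr : 0 < r) :
    ∫ t in Set.Ioi (0:ℝ), t ^ (β - 1) *
        ∫ s in Set.Ioi (0:ℝ), s ^ γ * besselHeat ζ t r s =
      Cconst β γ ζ * r ^ (2 * β + γ - 2 * ζ) := by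
  obtain ⟨hβ0, hβu⟩ := hβ
  have hν : (-1:ℝ) < ζ - 1/2 := by linarith
  have haa : 0 < (2*ζ - 2*β - γ)/2 := by linarith
  have hbb : 0 < (γ+1)/2 := by linarith
  -- measurability of the expanded integrand
  have hjm : Measurable (fun p : ℝ × ℝ => ∑' k : ℕ,
      ENNReal.ofReal (bTerm ζ γ r k p.1 p.2)) := by
    refine Measurable.ennreal_tsum fun k => ?_
    refine Measurable.ennreal_ofReal ?_
    unfold bTerm
    fun_prop
  set L : ℝ → ENNReal := fun t => ∫⁻ s in Set.Ioi (0:ℝ), ∑' k : ℕ,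
      ENNReal.ofReal (bTerm ζ γ r k t s) with hLdef
  have hLmeas : Measurable L := hjm.lintegral_prod_right'
  -- Claim 1 : the value of the double (lower) integral
  have hP : (∫⁻ t in Set.Ioi (0:ℝ), ENNReal.ofReal (t ^ (β-1)) * L t) =
      ENNReal.ofReal (Cconst β γ ζ * r ^ (2 * β + γ - 2 * ζ)) := by
    have step1 : ∀ t ∈ Set.Ioi (0:ℝ), ENNReal.ofReal (t ^ (β-1)) * L t =
        ∑' k : ℕ, ∫⁻ s in Set.Ioi (0:ℝ),
          ENNReal.ofReal (t ^ (β-1) * bTerm ζ γ r k t s) := by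
      intro t ht
      have ht : (0:ℝ) < t := ht
      rw [hLdef, ← lintegral_const_mul' _ _ ENNReal.ofReal_ne_top,
        ← lintegral_tsum (fun k => (bTerm_measurable' ζ γ β r k t).aemeasurable)]
      refine lintegral_congr fun s => ?_
      rw [← ENNReal.tsum_mul_left]
      exact tsum_congr fun k => (ENNReal.ofReal_mul (Real.rpow_nonneg ht.le _)).symm
    rw [setLIntegral_congr_fun_ae measurableSet_Ioi (Filter.Eventually.of_forall step1),
      lintegral_tsum (fun k => (bTerm_lintegral_measurable ζ γ β r k).aemeasurable)]
    simp_rw [lintegral_ts_bTerm hζ hγ haa hr]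
    rw [ENNReal.tsum_mul_left, gauss_sum hbb haa (by linarith),
      show ζ + 1/2 - (γ+1)/2 - (2*ζ-2*β-γ)/2 = β by ring,
      show ζ + 1/2 - (γ+1)/2 = (2*ζ-γ)/2 by ring,
      show ζ + 1/2 - (2*ζ-2*β-γ)/2 = (2*β+γ+1)/2 by ring,
      ← ENNReal.ofReal_mul (mul_nonneg (Real.rpow_nonneg (by norm_num) _)
        (Real.rpow_nonneg hr.le _))]
    congr 1
    unfold Cconst
    ring
  -- a.e. finiteness of the inner integral
  have hprod_meas : Measurable fun t => ENNReal.ofReal (t ^ (β-1)) * L t :=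
    Measurable.mul (by fun_prop) hLmeas
  have haeL : ∀ᵐ t ∂(volume.restrict (Set.Ioi (0:ℝ))), t ∈ Set.Ioi (0:ℝ) ∧ L t ≠ ⊤ := by
    have hae1 := ae_lt_top hprod_meas (hP ▸ ENNReal.ofReal_ne_top)
    have hae2 := ae_restrict_mem (μ := volume) measurableSet_Ioi (s := Set.Ioi (0:ℝ))
    filter_upwards [hae1, hae2] with t h1 h2
    refine ⟨h2, fun htop => ?_⟩
    have ht : (0:ℝ) < t := h2
    rw [htop, ENNReal.mul_top
      (ENNReal.ofReal_pos.2 (Real.rpow_pos_of_pos ht _)).ne'] at h1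
    exact lt_irrefl _ h1
  -- inner Bochner integral equals toReal of L
  have hinner : ∀ t ∈ Set.Ioi (0:ℝ),
      (∫ s in Set.Ioi (0:ℝ), s ^ γ * besselHeat ζ t r s) = (L t).toReal := by
    intro t ht
    have ht : (0:ℝ) < t := ht
    have hpt : ∀ s ∈ Set.Ioi (0:ℝ),
        ENNReal.ofReal (s ^ γ * besselHeat ζ t r s) =
          ∑' k : ℕ, ENNReal.ofReal (bTerm ζ γ r k t s) := by
      intro s hs
      have hs : (0:ℝ) < s := hs
      have hsum := bTerm_hasSum (γ := γ) hζ hr ht hs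
      rw [← hsum.tsum_eq, ENNReal.ofReal_tsum_of_nonneg
        (fun k => bTerm_nonneg hζ hr k ht hs) hsum.summable]
    have hnn : 0 ≤ᵐ[volume.restrict (Set.Ioi (0:ℝ))]
        fun s => s ^ γ * besselHeat ζ t r s := by
      refine (ae_restrict_iff' measurableSet_Ioi).2
        (Filter.Eventually.of_forall fun s hs => ?_)
      have hs : (0:ℝ) < s := hs
      have hsum := bTerm_hasSum (γ := γ) hζ hr ht hs
      show (0:ℝ) ≤ s ^ γ * besselHeat ζ t r s
      rw [← hsum.tsum_eq]
      exact tsum_nonneg fun k => bTerm_nonneg hζ hr k ht hs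
    have hmeas2 : Measurable fun s => ∑' k : ℕ, ENNReal.ofReal (bTerm ζ γ r k t s) :=
      hjm.comp (measurable_const.prodMk measurable_id)
    have hsm : AEStronglyMeasurable (fun s => s ^ γ * besselHeat ζ t r s)
        (volume.restrict (Set.Ioi (0:ℝ))) := by
      refine aestronglyMeasurable_iff_aemeasurable.2 ?_
      refine hmeas2.ennreal_toReal.aemeasurable.congr ?_
      refine (ae_restrict_iff' measurableSet_Ioi).2
        (Filter.Eventually.of_forall fun s hs => ?_)
      have hs' : (0:ℝ) < s := hs
      show (∑' k : ℕ, ENNReal.ofReal (bTerm ζ γ r k t s)).toReal = s ^ γ * besselHeat ζ t r s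
      rw [← hpt s hs, ENNReal.toReal_ofReal]
      have hsum := bTerm_hasSum (γ := γ) hζ hr ht hs'
      rw [← hsum.tsum_eq]
      exact tsum_nonneg fun k => bTerm_nonneg hζ hr k ht hs'
    rw [integral_eq_lintegral_of_nonneg_ae hnn hsm, hLdef]
    congr 1
    exact setLIntegral_congr_fun_ae measurableSet_Ioi (Filter.Eventually.of_forall hpt)
  -- put everything together
  have hC : (0:ℝ) ≤ Cconst β γ ζ * r ^ (2 * β + γ - 2 * ζ) := by
    have g1 := Real.Gamma_pos_of_pos hβ0
    have g2 := Real.Gamma_pos_of_pos hbb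
    have g3 := Real.Gamma_pos_of_pos haa
    have g4 := Real.Gamma_pos_of_pos (show (0:ℝ) < (2*ζ-γ)/2 by linarith)
    have g5 := Real.Gamma_pos_of_pos (show (0:ℝ) < (2*β+γ+1)/2 by linarith)
    have h2 : (0:ℝ) < (2:ℝ) ^ (-(2*β)) := Real.rpow_pos_of_pos (by norm_num) _
    have hrp : (0:ℝ) < r ^ (2 * β + γ - 2 * ζ) := Real.rpow_pos_of_pos hr _
    unfold Cconst
    positivity
  calc ∫ t in Set.Ioi (0:ℝ), t ^ (β-1) * ∫ s in Set.Ioi (0:ℝ), s ^ γ * besselHeat ζ t r s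
      = ∫ t in Set.Ioi (0:ℝ), t ^ (β-1) * (L t).toReal := by
        refine setIntegral_congr_fun measurableSet_Ioi fun t ht => ?_
        rw [hinner t ht]
    _ = (∫⁻ t in Set.Ioi (0:ℝ), ENNReal.ofReal (t ^ (β-1) * (L t).toReal)).toReal := by
        refine integral_eq_lintegral_of_nonneg_ae ?_ ?_
        · refine (ae_restrict_iff' measurableSet_Ioi).2
            (Filter.Eventually.of_forall fun t ht => ?_)
          have ht : (0:ℝ) < t := ht
          exact mul_nonneg (Real.rpow_pos_of_pos ht _).le ENNReal.toReal_nonneg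
        · refine aestronglyMeasurable_iff_aemeasurable.2 ?_
          exact (Measurable.mul (by fun_prop) hLmeas.ennreal_toReal).aemeasurable
    _ = (∫⁻ t in Set.Ioi (0:ℝ), ENNReal.ofReal (t ^ (β-1)) * L t).toReal := by
        congr 1
        refine lintegral_congr_ae ?_
        filter_upwards [haeL] with t htL
        obtain ⟨ht, hfin⟩ := htL
        have ht : (0:ℝ) < t := ht
        rw [ENNReal.ofReal_mul (Real.rpow_nonneg ht.le _), ENNReal.ofReal_toReal hfin]
    _ = Cconst β γ ζ * r ^ (2 * β + γ - 2 * ζ) := by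
        rw [hP, ENNReal.toReal_ofReal hC]
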